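/- Let R₀ and R₁ be the lag-0 and lag-1 covariance operators of a stationary Hilbertian process, i.e., R₀(h) = E[⟨ξ₀,h⟩ξ₀] and R₁(h) = E[⟨ξ₀,h⟩ξ₁] where (ξ₀,ξ₁) are centered strong-second-order random elements with ξ₁ having the same distribution as ξ₀. Then the closure of the range of R₁ is contained in the closure of the range of R₀. -/

import Mathlib

/-!
If `f ⊥ ran R₀`, then `E ⟪ξ₁, f⟫² = ⟪R₀ f, f⟫ = 0`, so `⟪ξ₁, f⟫ = 0` almost surely and hence
`⟪R₁ h, f⟫ = E[⟪ξ₀, h⟫ ⟪ξ₁, f⟫] = 0` for every `h`. Thus `(ran R₀)ᗮ ≤ (ran R₁)ᗮ`, and taking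
orthogonal complements once more gives the inclusion of the closures.
-/

open MeasureTheory
open scoped RealInnerProductSpace

section

variable {H : Type*} [NormedAddCommGroup H] [InnerProductSpace ℝ H]
  {Ω : Type*} [MeasurableSpace Ω] {μ : Measure Ω}

theorem MeasureTheory.MemLp.integrable_inner_const_smul {f g : Ω → H} (hf : MemLp f 2 μ)
    (hg : MemLp g 2 μ) (c : H) : Integrable (fun ω => ⟪g ω, c⟫ • f ω) μ := by
  rw [← memLp_one_iff_integrable]
  exact hf.smul (hg.inner_const c) (hpqr := ⟨by simp [ENNReal.inv_two_add_inv_two]⟩)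

theorem inner_integral_eq_zero_of_ae_inner_eq_zero [CompleteSpace H] {F : Ω → H} {f : H}
    (hF : ∀ᵐ ω ∂μ, ⟪F ω, f⟫ = 0) : ⟪∫ ω, F ω ∂μ, f⟫ = 0 := by
  by_cases hint : Integrable F μ
  · rw [real_inner_comm, ← integral_inner hint]
    exact integral_eq_zero_of_ae (hF.mono fun ω hω => (real_inner_comm _ _).trans hω)
  · rw [integral_undef hint, inner_zero_left]

theorem inner_integral_inner_smul_self [CompleteSpace H] {ξ : Ω → H} (hξ : MemLp ξ 2 μ) (f : H) :
    ⟪∫ ω, ⟪ξ ω, f⟫ • ξ ω ∂μ, f⟫ = ∫ ω, ⟪ξ ω, f⟫ ^ 2 ∂μ := by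
  rw [real_inner_comm, ← integral_inner (hξ.integrable_inner_const_smul hξ f)]
  congr 1 with ω
  rw [real_inner_smul_right, real_inner_comm, sq]

theorem ae_inner_eq_zero_of_inner_integral_inner_smul_self_eq_zero [CompleteSpace H]
    {ξ : Ω → H} (hξ : MemLp ξ 2 μ) {f : H} (h : ⟪∫ ω, ⟪ξ ω, f⟫ • ξ ω ∂μ, f⟫ = 0) :
    ∀ᵐ ω ∂μ, ⟪ξ ω, f⟫ = 0 := by
  rw [inner_integral_inner_smul_self hξ f,
    integral_eq_zero_iff_of_nonneg (fun ω => sq_nonneg _) (hξ.inner_const f).integrable_sq] at h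
  exact h.mono fun ω hω => pow_eq_zero_iff two_ne_zero |>.mp hω

theorem Submodule.topologicalClosure_le_topologicalClosure_of_orthogonal_le [CompleteSpace H]
    {K₀ K₁ : Submodule ℝ H} (h : K₀ᗮ ≤ K₁ᗮ) : K₁.topologicalClosure ≤ K₀.topologicalClosure := by
  rw [← K₀.orthogonal_orthogonal_eq_closure, ← K₁.orthogonal_orthogonal_eq_closure]
  exact Submodule.orthogonal_le h

end

theorem range_R1_subset_range_R0_general
    {H : Type*} [NormedAddCommGroup H] [InnerProductSpace ℝ H] [CompleteSpace H]
    {Ω : Type*} [MeasurableSpace Ω] {μ : Measure Ω}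
    (ξ₀ ξ₁ : Ω → H)
    (hL1 : MemLp ξ₁ 2 μ)
    (R₀ R₁ : H →L[ℝ] H)
    -- stationarity: ξ₁ has the same (zero-lag) covariance operator as ξ₀
    (hR0' : ∀ h : H, R₀ h = ∫ ω, ⟪ξ₁ ω, h⟫ • ξ₁ ω ∂μ)
    (hR1 : ∀ h : H, R₁ h = ∫ ω, ⟪ξ₀ ω, h⟫ • ξ₁ ω ∂μ) :
    (LinearMap.range (R₁ : H →ₗ[ℝ] H)).topologicalClosure ≤ (LinearMap.range (R₀ : H →ₗ[ℝ] H)).topologicalClosure := by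
  refine Submodule.topologicalClosure_le_topologicalClosure_of_orthogonal_le fun f hf => ?_
  have hξ₁f : ∀ᵐ ω ∂μ, ⟪ξ₁ ω, f⟫ = 0 :=
    ae_inner_eq_zero_of_inner_integral_inner_smul_self_eq_zero hL1
      (hR0' f ▸ Submodule.inner_right_of_mem_orthogonal (LinearMap.mem_range_self _ f) hf)
  rw [Submodule.mem_orthogonal]
  rintro _ ⟨h, rfl⟩
  rw [ContinuousLinearMap.coe_coe, hR1 h]
  exact inner_integral_eq_zero_of_ae_inner_eq_zero
    (hξ₁f.mono fun ω hω => by rw [real_inner_smul_left, hω, mul_zero])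

/-- For a stationary pair (ξ₀, ξ₁) of centered strong-second-order random elements
with common covariance operator R₀ and lag-1 cross-covariance operator R₁, the
closure of the range of R₁ is contained in the closure of the range of R₀. -/
theorem range_R1_subset_range_R0
    {H : Type*} [NormedAddCommGroup H] [InnerProductSpace ℝ H] [CompleteSpace H]
    [SecondCountableTopology H] [MeasurableSpace H] [BorelSpace H]
    {Ω : Type*} [MeasurableSpace Ω] {μ : Measure Ω} [IsProbabilityMeasure μ]
    (ξ₀ ξ₁ : Ω → H) (hm0 : Measurable ξ₀) (hm1 : Measurable ξ₁)
    (hL0 : MemLp ξ₀ 2 μ) (hL1 : MemLp ξ₁ 2 μ)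
    (hc0 : ∀ f : H, ∫ ω, ⟪ξ₀ ω, f⟫ ∂μ = 0) (hc1 : ∀ f : H, ∫ ω, ⟪ξ₁ ω, f⟫ ∂μ = 0)
    (R₀ R₁ : H →L[ℝ] H)
    (hR0 : ∀ h : H, R₀ h = ∫ ω, ⟪ξ₀ ω, h⟫ • ξ₀ ω ∂μ)
    -- stationarity: ξ₁ has the same (zero-lag) covariance operator as ξ₀
    (hR0' : ∀ h : H, R₀ h = ∫ ω, ⟪ξ₁ ω, h⟫ • ξ₁ ω ∂μ)
    (hR1 : ∀ h : H, R₁ h = ∫ ω, ⟪ξ₀ ω, h⟫ • ξ₁ ω ∂μ) :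
    (LinearMap.range (R₁ : H →ₗ[ℝ] H)).topologicalClosure ≤ (LinearMap.range (R₀ : H →ₗ[ℝ] H)).topologicalClosure :=
  range_R1_subset_range_R0_general ξ₀ ξ₁ hL1 R₀ R₁ hR0' hR1
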